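/- arXiv:2408.07176 — 5 statements merged into one kernel-verified Lean document; each statement's English description precedes it below -/
import Mathlib

section
/- Fix γ_o ∈ ℝ, γ_i > 0, λ > 0, τ > 0, Δ* > 0 with γ(u) = γ_o + γ_i e^{−λu}, and let ψ(s) = s·(γ(τ) − γ(s(τ+Δ*))) − (γ(τ) − γ(τ+1)) on [0,1]. If ψ(1) > 0 (equivalently γ(τ) − γ(τ+Δ*) > γ(τ) − γ(τ+1), i.e., Δ* > 1), then there exists a unique s̃ ∈ (τ/(τ+Δ*), 1) with ψ(s̃) = 0, and ψ(s) > 0 for all s ∈ (s̃, 1]. -/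
theorem stmt_7 (γo γi lam τ Δ : ℝ) (hγi : 0 < γi) (hlam : 0 < lam)
    (hτ : 0 < τ) (hΔ : 0 < Δ)
    (γ ψ : ℝ → ℝ) (hγ : ∀ u, γ u = γo + γi * Real.exp (-lam * u))
    (hψ : ∀ s, ψ s = s * (γ τ - γ (s * (τ + Δ))) - (γ τ - γ (τ + 1)))
    (h1 : 0 < ψ 1) :
    ∃ st ∈ Set.Ioo (τ / (τ + Δ)) 1,
      ψ st = 0 ∧
      (∀ s ∈ Set.Ioo (τ / (τ + Δ)) 1, ψ s = 0 → s = st) ∧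
      ∀ s ∈ Set.Ioc st 1, 0 < ψ s := by
  have hτΔ : 0 < τ + Δ := by linarith
  set s0 : ℝ := τ / (τ + Δ) with hs0def
  have hs0pos : 0 < s0 := div_pos hτ hτΔ
  have hs0mul : s0 * (τ + Δ) = τ := div_mul_cancel₀ τ (ne_of_gt hτΔ)
  have hs0lt1 : s0 < 1 := by
    rw [hs0def, div_lt_one hτΔ]; linarith
  -- g s = γ τ - γ (s * (τ + Δ))
  have hg : ∀ s, γ τ - γ (s * (τ + Δ))
      = γi * (Real.exp (-lam * τ) - Real.exp (-lam * (s * (τ + Δ)))) := by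
    intro s; rw [hγ, hγ]; ring
  have hgmono : ∀ a b : ℝ, a < b →
      γ τ - γ (a * (τ + Δ)) < γ τ - γ (b * (τ + Δ)) := by
    intro a b hab
    rw [hg, hg]
    have : Real.exp (-lam * (b * (τ + Δ))) < Real.exp (-lam * (a * (τ + Δ))) := by
      apply Real.exp_lt_exp.2
      nlinarith [mul_pos (mul_pos hlam (sub_pos.2 hab)) hτΔ]
    nlinarith
  have hgs0 : γ τ - γ (s0 * (τ + Δ)) = 0 := by rw [hs0mul]; ring
  have hgnonneg : ∀ a, s0 ≤ a → 0 ≤ γ τ - γ (a * (τ + Δ)) := by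
    intro a ha
    rcases eq_or_lt_of_le ha with h | h
    · rw [← h, hgs0]
    · linarith [hgmono s0 a h, hgs0]
  have hgpos : ∀ a, s0 < a → 0 < γ τ - γ (a * (τ + Δ)) := fun a h => by
    linarith [hgmono s0 a h, hgs0]
  -- strict mono of ψ on Icc s0 1
  have hmono : StrictMonoOn ψ (Set.Icc s0 1) := by
    intro a ha b hb hab
    rw [hψ a, hψ b]
    have ha0 : 0 < a := lt_of_lt_of_le hs0pos ha.1
    have hga : 0 ≤ γ τ - γ (a * (τ + Δ)) := hgnonneg a ha.1
    have hgb : 0 < γ τ - γ (b * (τ + Δ)) := hgpos b (lt_of_le_of_lt ha.1 hab)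
    have := hgmono a b hab
    nlinarith
  -- ψ s0 < 0
  have hψs0 : ψ s0 < 0 := by
    rw [hψ s0, hgs0]
    have : γ (τ + 1) < γ τ := by
      rw [hγ, hγ]
      have : Real.exp (-lam * (τ + 1)) < Real.exp (-lam * τ) := by
        apply Real.exp_lt_exp.2; nlinarith
      nlinarith
    nlinarith
  -- continuity
  have hψeq : ψ = fun s => s * (γi * (Real.exp (-lam * τ)
      - Real.exp (-lam * (s * (τ + Δ))))) - (γ τ - γ (τ + 1)) := by
    funext s; rw [hψ s, hg s]
  have hcont : ContinuousOn ψ (Set.Icc s0 1) := by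
    rw [hψeq]; fun_prop
  have hivt := intermediate_value_Ioo (le_of_lt hs0lt1) hcont
  have h0mem : (0 : ℝ) ∈ Set.Ioo (ψ s0) (ψ 1) := ⟨hψs0, h1⟩
  obtain ⟨st, hstmem, hstval⟩ := hivt h0mem
  refine ⟨st, hstmem, hstval, ?_, ?_⟩
  · intro s hs hsval
    have h1' : s ∈ Set.Icc s0 1 := ⟨le_of_lt hs.1, le_of_lt hs.2⟩
    have h2' : st ∈ Set.Icc s0 1 := ⟨le_of_lt hstmem.1, le_of_lt hstmem.2⟩
    exact hmono.injOn h1' h2' (by rw [hsval, hstval])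
  · intro s hs
    have h2' : st ∈ Set.Icc s0 1 := ⟨le_of_lt hstmem.1, le_of_lt hstmem.2⟩
    have h1' : s ∈ Set.Icc s0 1 := ⟨le_of_lt (lt_of_le_of_lt h2'.1 hs.1), hs.2⟩
    have := hmono h2' h1' hs.1
    rw [hstval] at this
    exact this
end

section
/- Fix γ_o ∈ ℝ, γ_i > 0, λ > 0, Δ* > 0, and s ∈ (0,1). Define g(τ) = s·(γ(τ) − γ(s(τ+Δ*))) − (γ(τ) − γ(τ+1)) where γ(u) = γ_o + γ_i e^{−λu}. Then g(τ) = γ_i [ s(e^{−λτ} − e^{−λs(τ+Δ*)}) − e^{−λτ}(1 − e^{−λ}) ], and g(τ) < 0 for all sufficiently large τ. -/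
theorem stmt_11 (γo γi lam Δ s : ℝ) (hγi : 0 < γi) (hlam : 0 < lam) (hΔ : 0 < Δ)
    (hs : s ∈ Set.Ioo (0 : ℝ) 1)
    (γ g : ℝ → ℝ) (hγ : ∀ u, γ u = γo + γi * Real.exp (-lam * u))
    (hg : ∀ τ, g τ = s * (γ τ - γ (s * (τ + Δ))) - (γ τ - γ (τ + 1))) :
    (∀ τ, g τ = γi * (s * (Real.exp (-lam * τ) - Real.exp (-lam * (s * (τ + Δ))))
      - Real.exp (-lam * τ) * (1 - Real.exp (-lam)))) ∧
    ∃ T, ∀ τ ≥ T, g τ < 0 := by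
  obtain ⟨hs0, hs1⟩ := hs
  have hid : ∀ τ, g τ = γi * (s * (Real.exp (-lam * τ) - Real.exp (-lam * (s * (τ + Δ))))
      - Real.exp (-lam * τ) * (1 - Real.exp (-lam))) := by
    intro τ
    rw [hg, hγ, hγ, hγ, show -lam * (τ + 1) = -lam * τ + -lam by ring, Real.exp_add]
    ring
  refine ⟨hid, ⟨s * Δ / (1 - s), fun τ hτ => ?_⟩⟩
  rw [hid]
  have hE1 : (0:ℝ) < Real.exp (-lam * τ) := Real.exp_pos _
  have hE2 : (0:ℝ) < Real.exp (-lam * (s * (τ + Δ))) := Real.exp_pos _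
  have key : s * (Real.exp (-lam * τ) - Real.exp (-lam * (s * (τ + Δ))))
      - Real.exp (-lam * τ) * (1 - Real.exp (-lam)) < 0 := by
    have ha : s - (1 - Real.exp (-lam)) < s := by
      have : 0 < 1 - Real.exp (-lam) := by
        have : Real.exp (-lam) < 1 := Real.exp_lt_one_iff.mpr (by linarith)
        linarith
      linarith
    have hrw : s * (Real.exp (-lam * τ) - Real.exp (-lam * (s * (τ + Δ))))
        - Real.exp (-lam * τ) * (1 - Real.exp (-lam))
        = (s - (1 - Real.exp (-lam))) * Real.exp (-lam * τ)
          - s * Real.exp (-lam * (s * (τ + Δ))) := by ring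
    rw [hrw]
    rcases le_or_gt (s - (1 - Real.exp (-lam))) 0 with h | h
    · have : (s - (1 - Real.exp (-lam))) * Real.exp (-lam * τ) ≤ 0 :=
        mul_nonpos_of_nonpos_of_nonneg h hE1.le
      nlinarith
    · have hτ' : -lam * τ ≤ -lam * (s * (τ + Δ)) := by
        have h1s : 0 < 1 - s := by linarith
        have : s * Δ ≤ (1 - s) * τ := by
          have := (div_le_iff₀ h1s).mp hτ
          linarith
        nlinarith
      have hle : Real.exp (-lam * τ) ≤ Real.exp (-lam * (s * (τ + Δ))) :=
        Real.exp_le_exp.mpr hτ'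
      nlinarith
  exact mul_neg_of_pos_of_neg hγi key
end

section
/- Let f^s, f^t : [0,1]^d → ℝ be Lipschitz with constant K* and fix ε > 0. Build the common cube partition with centers x_c^1, …, x_c^{N_B} and piecewise-constant approximations f^s_ε, f^t_ε. Suppose the rank vectors of (f^s(x_c^i))_i and (f^t(x_c^i))_i coincide (with distinct entries), and let x^s_min be a global minimizer of f^s_ε. Then f^t(x^s_min) − inf_{x} f^t(x) ≤ 4ε; that is, transferring the converged source solution puts the target within 4ε of its global optimum. -/
theorem stmt_15 (d N : ℕ) (fs ft : (Fin d → ℝ) → ℝ) (K ε : ℝ)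
    (hK : 0 < K) (hε : 0 < ε)
    (hlips : ∀ x ∈ Set.Icc (0 : Fin d → ℝ) 1, ∀ y ∈ Set.Icc (0 : Fin d → ℝ) 1,
      |fs x - fs y| ≤ K * dist x y)
    (hlipt : ∀ x ∈ Set.Icc (0 : Fin d → ℝ) 1, ∀ y ∈ Set.Icc (0 : Fin d → ℝ) 1,
      |ft x - ft y| ≤ K * dist x y)
    (xc : Fin N → (Fin d → ℝ)) (hxc : ∀ i, xc i ∈ Set.Icc (0 : Fin d → ℝ) 1)
    (A : (Fin d → ℝ) → Fin N)
    (hA : ∀ x ∈ Set.Icc (0 : Fin d → ℝ) 1, dist x (xc (A x)) ≤ ε / K)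
    (hinjs : Function.Injective (fun i => fs (xc i)))
    (hinjt : Function.Injective (fun i => ft (xc i)))
    (hrank : ∀ i : Fin N, (Finset.univ.filter (fun j => fs (xc j) ≤ fs (xc i))).card
      = (Finset.univ.filter (fun j => ft (xc j) ≤ ft (xc i))).card)
    (xsmin : Fin d → ℝ) (hxsmin : xsmin ∈ Set.Icc (0 : Fin d → ℝ) 1)
    (hmin : ∀ x ∈ Set.Icc (0 : Fin d → ℝ) 1, fs (xc (A xsmin)) ≤ fs (xc (A x))) :
    ft xsmin - sInf (ft '' Set.Icc (0 : Fin d → ℝ) 1) ≤ 4 * ε := by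
  classical
  -- rank equivalence: fs order implies ft order on centers
  have key : ∀ i j : Fin N, fs (xc i) ≤ fs (xc j) → ft (xc i) ≤ ft (xc j) := by
    intro i j hij
    by_contra hlt
    push_neg at hlt
    have hsub : (Finset.univ.filter (fun k => fs (xc k) ≤ fs (xc i)))
        ⊆ (Finset.univ.filter (fun k => fs (xc k) ≤ fs (xc j))) := by
      intro k hk
      simp only [Finset.mem_filter, Finset.mem_univ, true_and] at hk ⊢
      exact hk.trans hij
    have hcard : (Finset.univ.filter (fun k => fs (xc k) ≤ fs (xc i))).card
        ≤ (Finset.univ.filter (fun k => fs (xc k) ≤ fs (xc j))).card :=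
      Finset.card_le_card hsub
    rw [hrank i, hrank j] at hcard
    have hssub : (Finset.univ.filter (fun k => ft (xc k) ≤ ft (xc j)))
        ⊂ (Finset.univ.filter (fun k => ft (xc k) ≤ ft (xc i))) := by
      constructor
      · intro k hk
        simp only [Finset.mem_filter, Finset.mem_univ, true_and] at hk ⊢
        exact hk.trans hlt.le
      · intro hc
        have : i ∈ (Finset.univ.filter (fun k => ft (xc k) ≤ ft (xc j))) :=
          hc (by simp)
        simp only [Finset.mem_filter, Finset.mem_univ, true_and] at this
        exact absurd this (not_le.mpr hlt)
    exact absurd hcard (not_le.mpr (Finset.card_lt_card hssub))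
  have hpoint : ∀ x ∈ Set.Icc (0 : Fin d → ℝ) 1, ft xsmin ≤ ft x + 4 * ε := by
    intro x hx
    have h1 : |ft xsmin - ft (xc (A xsmin))| ≤ K * dist xsmin (xc (A xsmin)) :=
      hlipt _ hxsmin _ (hxc _)
    have h2 : |ft x - ft (xc (A x))| ≤ K * dist x (xc (A x)) :=
      hlipt _ hx _ (hxc _)
    have hd1 : K * dist xsmin (xc (A xsmin)) ≤ ε := by
      have := hA xsmin hxsmin
      calc K * dist xsmin (xc (A xsmin)) ≤ K * (ε / K) := by
            exact mul_le_mul_of_nonneg_left this hK.le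
        _ = ε := by field_simp
    have hd2 : K * dist x (xc (A x)) ≤ ε := by
      have := hA x hx
      calc K * dist x (xc (A x)) ≤ K * (ε / K) := by
            exact mul_le_mul_of_nonneg_left this hK.le
        _ = ε := by field_simp
    have hc : ft (xc (A xsmin)) ≤ ft (xc (A x)) := key _ _ (hmin x hx)
    have e1 : ft xsmin - ft (xc (A xsmin)) ≤ ε := (abs_le.mp (h1.trans hd1)).2
    have e2 : ft (xc (A x)) - ft x ≤ ε := by
      have := (abs_le.mp (h2.trans hd2)).1
      linarith
    linarith
  have hne : (ft '' Set.Icc (0 : Fin d → ℝ) 1).Nonempty := by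
    exact ⟨ft 0, ⟨0, ⟨le_refl _, fun i => zero_le_one⟩, rfl⟩⟩
  have : ft xsmin - 4 * ε ≤ sInf (ft '' Set.Icc (0 : Fin d → ℝ) 1) := by
    apply le_csInf hne
    rintro y ⟨x, hx, rfl⟩
    linarith [hpoint x hx]
  linarith
end

section
/- Fix λ > 0, τ > 0, and for Δ* > 1 let s̃(Δ*) ∈ (τ/(τ+Δ*), 1) denote the unique root of ψ(s) = s(e^{−λτ} − e^{−λs(τ+Δ*)}) − e^{−λτ}(1 − e^{−λ}) (assuming ψ(1) > 0 for all Δ* considered). Then s̃ is strictly decreasing in Δ*: if Δ*₁ < Δ*₂ then s̃(Δ*₂) < s̃(Δ*₁). -/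
theorem stmt_17 (lam τ : ℝ) (hlam : 0 < lam) (hτ : 0 < τ)
    (ψ : ℝ → ℝ → ℝ)
    (hψ : ∀ Δ s, ψ Δ s = s * (Real.exp (-lam * τ) - Real.exp (-lam * (s * (τ + Δ))))
      - Real.exp (-lam * τ) * (1 - Real.exp (-lam)))
    (Δ₁ Δ₂ s₁ s₂ : ℝ) (h1 : 1 < Δ₁) (h12 : Δ₁ < Δ₂)
    (hpos1 : 0 < ψ Δ₁ 1) (hpos2 : 0 < ψ Δ₂ 1)
    (hs1 : s₁ ∈ Set.Ioo (τ / (τ + Δ₁)) 1) (hs2 : s₂ ∈ Set.Ioo (τ / (τ + Δ₂)) 1)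
    (hr1 : ψ Δ₁ s₁ = 0) (hr2 : ψ Δ₂ s₂ = 0)
    (hup1 : ∀ s ∈ Set.Ioc s₁ 1, 0 < ψ Δ₁ s)
    (hup2 : ∀ s ∈ Set.Ioc s₂ 1, 0 < ψ Δ₂ s) :
    s₂ < s₁ := by
  by_contra h
  push_neg at h
  have hs2pos : 0 < s₂ := lt_trans (div_pos hτ (by linarith)) hs2.1
  -- ψ Δ₁ s₂ < ψ Δ₂ s₂ = 0
  have hexp : Real.exp (-lam * (s₂ * (τ + Δ₂))) < Real.exp (-lam * (s₂ * (τ + Δ₁))) := by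
    apply Real.exp_lt_exp.mpr
    nlinarith [mul_pos (mul_pos hlam hs2pos) (sub_pos.mpr h12)]
  have hlt : ψ Δ₁ s₂ < ψ Δ₂ s₂ := by
    rw [hψ, hψ]
    nlinarith
  rw [hr2] at hlt
  rcases eq_or_lt_of_le h with heq | hlt2
  · rw [← heq, hr1] at hlt; exact lt_irrefl 0 hlt
  · exact absurd (hup1 s₂ ⟨hlt2, le_of_lt hs2.2⟩) (by linarith)
end

section
/- Fix λ > 0, Δ* > 1, and for τ > 0 let s̃(τ) denote the unique root in (τ/(τ+Δ*), 1) of ψ_τ(s) = s(e^{−λτ} − e^{−λs(τ+Δ*)}) − e^{−λτ}(1 − e^{−λ}), whenever ψ_τ(1) > 0. Then s̃(τ) is strictly increasing in τ; that is, as the target search proceeds, a strictly higher similarity is required for the knowledge transfer to yield positive convergence gain. -/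
theorem stmt_18 (lam Δ : ℝ) (hlam : 0 < lam) (hΔ : 1 < Δ)
    (ψ : ℝ → ℝ → ℝ)
    (hψ : ∀ τ s, ψ τ s = s * (Real.exp (-lam * τ) - Real.exp (-lam * (s * (τ + Δ))))
      - Real.exp (-lam * τ) * (1 - Real.exp (-lam)))
    (τ₁ τ₂ s₁ s₂ : ℝ) (hτ1 : 0 < τ₁) (hτ12 : τ₁ < τ₂)
    (hpos1 : 0 < ψ τ₁ 1) (hpos2 : 0 < ψ τ₂ 1)
    (hs1 : s₁ ∈ Set.Ioo (τ₁ / (τ₁ + Δ)) 1) (hs2 : s₂ ∈ Set.Ioo (τ₂ / (τ₂ + Δ)) 1)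
    (hr1 : ψ τ₁ s₁ = 0) (hr2 : ψ τ₂ s₂ = 0)
    (hup1 : ∀ s ∈ Set.Ioc s₁ 1, 0 < ψ τ₁ s)
    (hup2 : ∀ s ∈ Set.Ioc s₂ 1, 0 < ψ τ₂ s) :
    s₁ < s₂ := by
  obtain ⟨hs1l, hs1u⟩ := hs1
  have hden1 : 0 < τ₁ + Δ := by linarith
  have hs1pos : 0 < s₁ := lt_trans (div_pos hτ1 hden1) hs1l
  -- factorization: ψ τ s₁ = exp(-lam*τ) * (s₁*(1 - exp(-lam*(s₁*(τ+Δ) - τ))) - c)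
  have fact : ∀ τ : ℝ, ψ τ s₁ =
      Real.exp (-lam * τ) *
        (s₁ * (1 - Real.exp (-lam * (s₁ * (τ + Δ) - τ))) - (1 - Real.exp (-lam))) := by
    intro τ
    rw [hψ]
    have : Real.exp (-lam * (s₁ * (τ + Δ))) =
        Real.exp (-lam * τ) * Real.exp (-lam * (s₁ * (τ + Δ) - τ)) := by
      rw [← Real.exp_add]; ring_nf
    rw [this]; ring
  set a₁ := Real.exp (-lam * (s₁ * (τ₁ + Δ) - τ₁)) with ha1
  set a₂ := Real.exp (-lam * (s₁ * (τ₂ + Δ) - τ₂)) with ha2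
  have ha12 : a₁ < a₂ := by
    apply Real.exp_lt_exp.mpr
    have : s₁ * (τ₂ + Δ) - τ₂ < s₁ * (τ₁ + Δ) - τ₁ := by nlinarith
    nlinarith
  have hE1 : (0:ℝ) < Real.exp (-lam * τ₁) := Real.exp_pos _
  have heq1 : s₁ * (1 - a₁) - (1 - Real.exp (-lam)) = 0 := by
    have := hr1
    rw [fact τ₁] at this
    exact (mul_eq_zero.mp this).resolve_left (ne_of_gt hE1)
  have hneg : ψ τ₂ s₁ < 0 := by
    rw [fact τ₂]
    have h2 : s₁ * (1 - a₂) - (1 - Real.exp (-lam)) < 0 := by nlinarith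
    exact mul_neg_of_pos_of_neg (Real.exp_pos _) h2
  by_contra h
  push_neg at h
  rcases eq_or_lt_of_le h with heq | hlt
  · rw [heq] at hr2
    linarith
  · have := hup2 s₁ ⟨hlt, le_of_lt hs1u⟩
    linarith
end
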